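/- In the closeness-reduction graph G constructed from a 3-Set Cover instance (U, S, k) with |U| = l and |S| = m, for any set A* ⊆ {(t,S_i) : S_i ∈ S} of added edges, the sum of distances from v_e to all other nodes in G' = (V, E ∪ A*) equals 5l + 3m - 2k + 3. -/
import Mathlib


/-- Vertex type of the closeness-reduction graph built from a 3-Set Cover instance with
universe size `l`, family size `m` and parameter `k`:
`v_e = Sum.inl (Sum.inl ())`, `t = Sum.inl (Sum.inr ())`,
set nodes `S_i = Sum.inr (Sum.inl (Sum.inl i))`,
universe nodes `u_j = Sum.inr (Sum.inl (Sum.inr j))`,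
nodes `w_j = Sum.inr (Sum.inr (Sum.inl j))`, and
pendant nodes `x_i = Sum.inr (Sum.inr (Sum.inr i))`. -/
abbrev CVert (l m k : ℕ) :=
  (Unit ⊕ Unit) ⊕ (Fin m ⊕ Fin l) ⊕ (Fin l ⊕ Fin (l + m - k + 1))

/-- The closeness-reduction graph `G' = (V, E ∪ A*)` built from a 3-Set Cover instance
`(U, S, k)`, where `S i` is the `i`-th 3-element subset of the universe `Fin l` and the
set `A ⊆ Fin m` records the added edges `(t, S_i)` for `i ∈ A`.  Base edges: `(t, v_e)`;
`(x_i, t)` for all `i`; `(w_j, v_e)` and `(w_j, u_j)` for all `j`; `(S_i, v_e)` for all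
`i`; and `(S_i, u_j)` for `u_j ∈ S_i`. -/
def Cgraph (l m k : ℕ) (S : Fin m → Finset (Fin l)) (A : Finset (Fin m)) :
    SimpleGraph (CVert l m k) :=
  SimpleGraph.fromRel (fun a b =>
    match a, b with
    | Sum.inl (Sum.inl _), Sum.inl (Sum.inr _) => True
    | Sum.inr (Sum.inr (Sum.inr _)), Sum.inl (Sum.inr _) => True
    | Sum.inr (Sum.inr (Sum.inl _)), Sum.inl (Sum.inl _) => True
    | Sum.inr (Sum.inr (Sum.inl j)), Sum.inr (Sum.inl (Sum.inr j')) => j = j'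
    | Sum.inr (Sum.inl (Sum.inl _)), Sum.inl (Sum.inl _) => True
    | Sum.inr (Sum.inl (Sum.inl i)), Sum.inr (Sum.inl (Sum.inr j)) => j ∈ S i
    | Sum.inl (Sum.inr _), Sum.inr (Sum.inl (Sum.inl i)) => i ∈ A
    | _, _ => False)

/-- `D(G', v)`: the sum of shortest-path distances from `v` to all other nodes. -/
noncomputable def Dsum {l m k : ℕ} (G : SimpleGraph (CVert l m k)) (v : CVert l m k) : ℕ :=
  ∑ w : CVert l m k, G.dist v w

section aux
variable {l m k : ℕ} {S : Fin m → Finset (Fin l)} {A : Finset (Fin m)}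

lemma dist_two_of (G : SimpleGraph (CVert l m k)) {a b c : CVert l m k}
    (h1 : G.Adj a b) (h2 : G.Adj b c) (hne : a ≠ c) (hnadj : ¬ G.Adj a c) :
    G.dist a c = 2 := by
  have hle : G.dist a c ≤ 2 := by
    have := G.dist_le (SimpleGraph.Walk.cons h1 (SimpleGraph.Walk.cons h2 SimpleGraph.Walk.nil))
    simpa using this
  have hr : G.Reachable a c :=
    ⟨SimpleGraph.Walk.cons h1 (SimpleGraph.Walk.cons h2 SimpleGraph.Walk.nil)⟩
  have h0 : G.dist a c ≠ 0 := by
    rw [SimpleGraph.dist_ne_zero_iff_ne_and_reachable]; exact ⟨hne, hr⟩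
  have h1' : G.dist a c ≠ 1 := fun h =>
    hnadj (SimpleGraph.dist_eq_one_iff_adj.mp h)
  omega

lemma dist_t (u v : Unit) :
    (Cgraph l m k S A).dist (Sum.inl (Sum.inl u)) (Sum.inl (Sum.inr v)) = 1 := by
  rw [SimpleGraph.dist_eq_one_iff_adj]
  simp [Cgraph, SimpleGraph.fromRel_adj]

lemma dist_s (i : Fin m) :
    (Cgraph l m k S A).dist (Sum.inl (Sum.inl ())) (Sum.inr (Sum.inl (Sum.inl i))) = 1 := by
  rw [SimpleGraph.dist_eq_one_iff_adj]
  simp [Cgraph, SimpleGraph.fromRel_adj]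

lemma dist_w (j : Fin l) :
    (Cgraph l m k S A).dist (Sum.inl (Sum.inl ())) (Sum.inr (Sum.inr (Sum.inl j))) = 1 := by
  rw [SimpleGraph.dist_eq_one_iff_adj]
  simp [Cgraph, SimpleGraph.fromRel_adj]

lemma dist_u (j : Fin l) :
    (Cgraph l m k S A).dist (Sum.inl (Sum.inl ())) (Sum.inr (Sum.inl (Sum.inr j))) = 2 := by
  refine dist_two_of _ (b := Sum.inr (Sum.inr (Sum.inl j))) ?_ ?_ (by simp) ?_ <;>
    simp [Cgraph, SimpleGraph.fromRel_adj]

lemma dist_x (i : Fin (l + m - k + 1)) :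
    (Cgraph l m k S A).dist (Sum.inl (Sum.inl ())) (Sum.inr (Sum.inr (Sum.inr i))) = 2 := by
  refine dist_two_of _ (b := Sum.inl (Sum.inr ())) ?_ ?_ (by simp) ?_ <;>
    simp [Cgraph, SimpleGraph.fromRel_adj]

end aux

/-- For any set `A*` of added edges `(t, S_i)`, the sum of distances from `v_e` to all
other nodes in `G' = (V, E ∪ A*)` equals `5l + 3m - 2k + 3`. -/
theorem Dsum_evader (l m k : ℕ) (hkm : k ≤ m) (S : Fin m → Finset (Fin l))
    (h3 : ∀ i, (S i).card = 3) (A : Finset (Fin m)) :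
    Dsum (Cgraph l m k S A) (Sum.inl (Sum.inl ())) = 5 * l + 3 * m - 2 * k + 3 := by
  rw [Dsum]
  rw [Fintype.sum_sum_type, Fintype.sum_sum_type, Fintype.sum_sum_type, Fintype.sum_sum_type,
    Fintype.sum_sum_type]
  simp only [Fintype.sum_unique, dist_t, dist_s, dist_w, dist_u, dist_x, SimpleGraph.dist_self]
  simp only [Finset.sum_const, Finset.card_univ, Fintype.card_fin, Fintype.card_unit,
    smul_eq_mul]
  have : ∑ _x : Unit, (Cgraph l m k S A).dist (Sum.inl (Sum.inl ())) (Sum.inl (Sum.inl _x)) = 0 := by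
    simp [SimpleGraph.dist_self]
  omega
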